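/- Let G be a labeled block graph, let B' be a support block of G, let c_i ∈ C\{c_h} be a cut vertex of B', and let B_{ij} be an end block of G whose unique cut vertex is c_i. If l_2(B_{ij}) = 0 and l_1(B_{ij}) ≥ 1, then γ(G) = γ(G'), where G' is the labeled block graph obtained from G by relabelling max{1 − |r(V(B_{ij}))|, 0} vertices of B_{ij} that have t-label B as R, with priority given to c_i, and keeping every other label the same. -/
import Mathlib


open SimpleGraph
open scoped Classical

/-- The two possible t-labels of a vertex of a labeled block graph. -/
inductive TLabel
  | B
  | R
deriving DecidableEq

/-- A labeled graph: a graph together with labels `M_V(v) = (t v, s v)` on vertices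
and `k e` on (potential) edges. -/
structure LBG (V : Type*) where
  graph : SimpleGraph V
  t : V → TLabel
  s : V → ℕ
  k : Sym2 V → ℕ

variable {V : Type*}

/-- closed neighbourhood `N_G[v]` -/
def cN (G : SimpleGraph V) (v : V) : Set V := insert v {u | G.Adj v u}

/-- open neighbourhood `N_G(v)` -/
def oN (G : SimpleGraph V) (v : V) : Set V := {u | G.Adj v u}

/-- closed neighbourhood `N_G[e]` of an edge -/
def eN (G : SimpleGraph V) (e : Sym2 V) : Set V := {w | ∃ x ∈ e, w ∈ cN G x}

/-- `r(S)`: the vertices of `S` with t-label `R`. -/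
def rSet (H : LBG V) (S : Set V) : Set V := {v | v ∈ S ∧ H.t v = TLabel.R}

/-- An `M_{LVE}`-dominating set of a labeled graph. -/
def IsMLVE (H : LBG V) (L : Set V) : Prop :=
  (∀ v, H.t v = TLabel.R → v ∈ L) ∧
  (∀ v, H.s v ≤ (cN H.graph v ∩ L).ncard) ∧
  (∀ e ∈ H.graph.edgeSet, H.k e ≤ (eN H.graph e ∩ L).ncard) ∧
  (∀ e ∈ H.graph.edgeSet, ∀ f ∈ H.graph.edgeSet, e ≠ f →
    H.k e + H.k f - 1 ≤ ((eN H.graph e ∪ eN H.graph f) ∩ L).ncard)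

/-- `γ(G)`: the minimum cardinality of an `M_{LVE}`-dominating set. -/
noncomputable def gam (H : LBG V) : ℕ :=
  sInf {n | ∃ L : Set V, IsMLVE H L ∧ L.ncard = n}

/-- A liar's vertex-edge dominating set. -/
def IsLiarVE (G : SimpleGraph V) (L : Set V) : Prop :=
  (∀ e ∈ G.edgeSet, 2 ≤ (eN G e ∩ L).ncard) ∧
  (∀ e ∈ G.edgeSet, ∀ f ∈ G.edgeSet, e ≠ f → 3 ≤ ((eN G e ∪ eN G f) ∩ L).ncard)

/-- `v` is a cut vertex of `G`: removing it disconnects two vertices that were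
connected in `G`. -/
def IsCutVertex (G : SimpleGraph V) (v : V) : Prop :=
  ∃ x y : {u : V // u ≠ v}, G.Reachable x.1 y.1 ∧
    ¬ (G.induce {u : V | u ≠ v}).Reachable ⟨x.1, x.2⟩ ⟨y.1, y.2⟩

/-- A vertex set inducing a connected subgraph without a cut vertex. -/
def GoodSet (G : SimpleGraph V) (Bs : Set V) : Prop :=
  (G.induce Bs).Connected ∧ ∀ v, ¬ IsCutVertex (G.induce Bs) v

/-- A block of `G`: a maximal connected subgraph without a cut vertex. -/
def IsBlock (G : SimpleGraph V) (Bs : Set V) : Prop :=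
  GoodSet G Bs ∧ ∀ Bs' : Set V, Bs ⊆ Bs' → GoodSet G Bs' → Bs' = Bs

/-- A block graph: every block is a clique. -/
def IsBlockGraph (G : SimpleGraph V) : Prop :=
  ∀ Bs : Set V, IsBlock G Bs → G.IsClique Bs

/-- `Bs` is an end block of `G` whose unique cut vertex is `c`. -/
def EndBlockWith (G : SimpleGraph V) (Bs : Set V) (c : V) : Prop :=
  IsBlock G Bs ∧ c ∈ Bs ∧ IsCutVertex G c ∧ ∀ c' ∈ Bs, IsCutVertex G c' → c' = c

/-- The cut-tree of `G`: vertices are the blocks and the cut vertices of `G`,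
with an edge joining a block to each cut vertex it contains. -/
def cutTree (G : SimpleGraph V) :
    SimpleGraph ({Bs : Set V // IsBlock G Bs} ⊕ {v : V // IsCutVertex G v}) :=
  SimpleGraph.fromRel (fun a b =>
    match a, b with
    | Sum.inl Bs, Sum.inr c => (c : V) ∈ (Bs : Set V)
    | _, _ => False)

/-- Distance to the root `ρ` (a cut vertex) in the cut-tree. -/
noncomputable def rootDist (G : SimpleGraph V) (ρ : {v : V // IsCutVertex G v})
    (x : {Bs : Set V // IsBlock G Bs} ⊕ {v : V // IsCutVertex G v}) : ℕ :=
  (cutTree G).dist x (Sum.inr ρ)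

/-- `Bi` is a descendant block of `Bj` in the cut-tree rooted at `ρ`:
`Bj` is the parent of the parent of `Bi`. -/
def IsDescBlock (G : SimpleGraph V) (ρ : {v : V // IsCutVertex G v})
    (Bj Bi : {Bs : Set V // IsBlock G Bs}) : Prop :=
  ∃ c : {v : V // IsCutVertex G v}, (c : V) ∈ (Bi : Set V) ∧ (c : V) ∈ (Bj : Set V) ∧
    rootDist G ρ (Sum.inr c) + 1 = rootDist G ρ (Sum.inl Bi) ∧
    rootDist G ρ (Sum.inl Bj) + 1 = rootDist G ρ (Sum.inr c)

/-- A support block: all of its descendant blocks are end blocks of `G`. -/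
def IsSupportBlock (G : SimpleGraph V) (ρ : {v : V // IsCutVertex G v})
    (B' : {Bs : Set V // IsBlock G Bs}) : Prop :=
  ∀ Bi, IsDescBlock G ρ B' Bi → ∃ c : V, EndBlockWith G (Bi : Set V) c

/-- The edges of (the subgraph induced by) a block `Bs`. -/
def blockEdges (G : SimpleGraph V) (Bs : Set V) : Set (Sym2 V) :=
  {e | e ∈ G.edgeSet ∧ ∀ x ∈ e, x ∈ Bs}

/-- Relabel all vertices of `A` with t-label `R`, keeping every other label the same. -/
noncomputable def relabelR (H : LBG V) (A : Set V) : LBG V :=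
  { H with t := fun v => if v ∈ A then TLabel.R else H.t v }

/-- `l_2(c)`: the number of edges of the end blocks whose unique cut vertex is `c`
that are incident to `c` and have k-label `2`. -/
noncomputable def l2cut (H : LBG V) (c : V) : ℕ :=
  ({e : Sym2 V | (∃ Bs : Set V, EndBlockWith H.graph Bs c ∧ e ∈ blockEdges H.graph Bs) ∧
     c ∈ e ∧ H.k e = 2}).ncard

section Aux

variable {V : Type*}

/-- Reachability within a vertex set `T`: a walk whose whole support lies in `T`. -/
def RIn (G : SimpleGraph V) (T : Set V) (a b : V) : Prop :=
  ∃ p : G.Walk a b, ∀ x ∈ p.support, x ∈ T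

namespace RIn
variable {G : SimpleGraph V} {T T' : Set V} {a b c : V}
lemma refl (ha : a ∈ T) : RIn G T a a := ⟨SimpleGraph.Walk.nil, by simp [ha]⟩
lemma symm (h : RIn G T a b) : RIn G T b a := by
  obtain ⟨p, hp⟩ := h; exact ⟨p.reverse, by simpa using hp⟩
lemma trans (h : RIn G T a b) (h' : RIn G T b c) : RIn G T a c := by
  obtain ⟨p, hp⟩ := h; obtain ⟨q, hq⟩ := h'
  refine ⟨p.append q, fun x hx => ?_⟩
  rcases (SimpleGraph.Walk.mem_support_append_iff _ _).mp hx with h | h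
  · exact hp x h
  · exact hq x h
lemma mono (hT : T ⊆ T') (h : RIn G T a b) : RIn G T' a b := by
  obtain ⟨p, hp⟩ := h; exact ⟨p, fun x hx => hT (hp x hx)⟩
lemma adj (h : G.Adj a b) (ha : a ∈ T) (hb : b ∈ T) : RIn G T a b :=
  ⟨h.toWalk, by simp [ha, hb]⟩
end RIn

lemma walk_reachable {G : SimpleGraph V} {T : Set V} :
    ∀ {a b : V} (p : G.Walk a b), (∀ x ∈ p.support, x ∈ T) →
    ∀ (ha : a ∈ T) (hb : b ∈ T), (G.induce T).Reachable ⟨a, ha⟩ ⟨b, hb⟩ := by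
  intro a b p
  induction p with
  | nil => intro _ ha hb; exact Reachable.refl _
  | @cons a c b hadj q ih =>
    intro hsupp ha hb
    have hc : c ∈ T := hsupp c (by simp)
    have h1 : (G.induce T).Adj ⟨a, ha⟩ ⟨c, hc⟩ := hadj
    exact h1.reachable.trans (ih (fun x hx => hsupp x (by simp [hx])) hc hb)

lemma rin_reachable {G : SimpleGraph V} {T : Set V} {a b : V}
    (h : RIn G T a b) (ha : a ∈ T) (hb : b ∈ T) :
    (G.induce T).Reachable ⟨a, ha⟩ ⟨b, hb⟩ := by
  obtain ⟨p, hp⟩ := h; exact walk_reachable p hp ha hb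

lemma walk_reachable2 {G : SimpleGraph V} {S : Set V} {v : ↥S} :
    ∀ {a b : V} (p : G.Walk a b), (∀ x ∈ p.support, x ∈ S ∧ x ≠ (v : V)) →
    ∀ (ha : a ∈ S) (ha' : a ≠ (v : V)) (hb : b ∈ S) (hb' : b ≠ (v : V)),
      ((G.induce S).induce {u : ↥S | u ≠ v}).Reachable
        ⟨⟨a, ha⟩, fun h => ha' (congrArg Subtype.val h)⟩
        ⟨⟨b, hb⟩, fun h => hb' (congrArg Subtype.val h)⟩ := by
  intro a b p
  induction p with
  | nil => intro _ ha ha' hb hb'; exact Reachable.refl _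
  | @cons a c b hadj q ih =>
    intro hsupp ha ha' hb hb'
    have hc : c ∈ S ∧ c ≠ (v : V) := hsupp c (by simp)
    have h1 : ((G.induce S).induce {u : ↥S | u ≠ v}).Adj
        ⟨⟨a, ha⟩, fun h => ha' (congrArg Subtype.val h)⟩
        ⟨⟨c, hc.1⟩, fun h => hc.2 (congrArg Subtype.val h)⟩ := hadj
    exact h1.reachable.trans (ih (fun x hx => hsupp x (by simp [hx])) hc.1 hc.2 hb hb')

lemma rin_reachable2 {G : SimpleGraph V} {S : Set V} {v : ↥S} {a b : V}
    (h : RIn G (S \ {(v : V)}) a b) (ha : a ∈ S) (ha' : a ≠ (v : V))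
    (hb : b ∈ S) (hb' : b ≠ (v : V)) :
    ((G.induce S).induce {u : ↥S | u ≠ v}).Reachable
      ⟨⟨a, ha⟩, fun h => ha' (congrArg Subtype.val h)⟩
      ⟨⟨b, hb⟩, fun h => hb' (congrArg Subtype.val h)⟩ := by
  obtain ⟨p, hp⟩ := h
  exact walk_reachable2 p (fun x hx => (hp x hx : x ∈ S \ {(v : V)})) ha ha' hb hb'

lemma pathToStart {G : SimpleGraph V} :
    ∀ {a b : V} (p : G.Walk a b) (u : V), u ∈ p.support →
      RIn G {x | x ∈ p.support} u a := by
  intro a b p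
  induction p with
  | nil => intro u hu; simp at hu; subst hu; exact RIn.refl (by simp)
  | @cons a c b hadj q ih =>
    intro u hu
    rcases (by simpa using hu : u = a ∨ u ∈ q.support) with rfl | hu'
    · exact RIn.refl (by simp)
    · have h1 := ih u hu'
      have h2 : RIn G {x | x ∈ (SimpleGraph.Walk.cons hadj q).support} u c :=
        RIn.mono (fun x hx => by simp at hx ⊢; exact Or.inr hx) h1
      exact h2.trans (RIn.adj hadj.symm (by simp) (by simp))

lemma pathSplit {G : SimpleGraph V} :
    ∀ {a b : V} (p : G.Walk a b), p.IsPath → ∀ (v u : V), u ∈ p.support → u ≠ v →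
      (a ≠ v ∧ RIn G ({x | x ∈ p.support} \ {v}) u a) ∨
      (b ≠ v ∧ RIn G ({x | x ∈ p.support} \ {v}) u b) := by
  intro a b p
  induction p with
  | nil =>
    intro _ v u hu hne; simp at hu; subst hu
    exact Or.inl ⟨hne, RIn.refl ⟨by simp, hne⟩⟩
  | @cons a c b hadj q ih =>
    intro hp v u hu hne
    have hq : q.IsPath := hp.of_cons
    have hanot : a ∉ q.support := ((SimpleGraph.Walk.cons_isPath_iff _ _).mp hp).2
    have hsub : {x | x ∈ q.support} \ {v} ⊆
        {x | x ∈ (SimpleGraph.Walk.cons hadj q).support} \ {v} := by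
      intro x hx; exact ⟨by simp; exact Or.inr hx.1, hx.2⟩
    rcases (by simpa using hu : u = a ∨ u ∈ q.support) with rfl | hu'
    · exact Or.inl ⟨hne, RIn.refl ⟨by simp, hne⟩⟩
    · rcases ih hq v u hu' hne with ⟨hcv, hr⟩ | ⟨hbv, hr⟩
      · by_cases hav : a = v
        · subst hav
          right
          have hb : b ≠ a := fun h => hanot (h ▸ q.end_mem_support)
          refine ⟨hb, ?_⟩
          have h2 : RIn G ({x | x ∈ q.support} \ {a}) c b :=
            ⟨q, fun x hx => ⟨hx, fun h => hanot (by rw [Set.mem_singleton_iff] at h; exact h ▸ hx)⟩⟩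
          exact RIn.mono hsub (hr.trans h2)
        · left
          refine ⟨hav, ?_⟩
          exact (RIn.mono hsub hr).trans
            (RIn.adj hadj.symm ⟨by simp, hcv⟩ ⟨by simp, hav⟩)
      · exact Or.inr ⟨hbv, RIn.mono hsub hr⟩

/-- In a block which is a clique, a non-cut vertex has all its neighbours inside the block. -/
lemma blockNbhd {G : SimpleGraph V} {Bs : Set V}
    (hB : IsBlock G Bs) (hclq : G.IsClique Bs) {y w : V} (hy : y ∈ Bs) (hw : w ∈ Bs)
    (hwy : w ≠ y) (hyc : ¬ IsCutVertex G y) {z : V} (hz : G.Adj y z) : z ∈ Bs := by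
  by_contra hzB
  have hwz_reach : G.Reachable w z := ((hclq hw hy hwy).reachable).trans hz.reachable
  have hre : (G.induce {u : V | u ≠ y}).Reachable ⟨w, hwy⟩ ⟨z, hz.ne'⟩ := by
    by_contra hc; exact hyc ⟨⟨w, hwy⟩, ⟨z, hz.ne'⟩, hwz_reach, hc⟩
  obtain ⟨p⟩ := hre
  let f : G.induce {u : V | u ≠ y} →g G := ⟨Subtype.val, fun h => h⟩
  let p0 : G.Walk w z := p.map f
  have hp0supp : ∀ x ∈ p0.support, x ≠ y := by
    intro x hx
    rw [SimpleGraph.Walk.support_map] at hx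
    obtain ⟨x', _, rfl⟩ := List.mem_map.mp hx
    exact x'.2
  set P : G.Walk w z := p0.toPath.1 with hPdef
  have hPpath : P.IsPath := p0.toPath.2
  have hPsupp : ∀ x ∈ P.support, x ≠ y := fun x hx =>
    hp0supp x (SimpleGraph.Walk.support_toPath_subset p0 hx)
  set S : Set V := Bs ∪ {x | x ∈ P.support} with hS
  have hyS : y ∈ S := Or.inl hy
  have hwS : w ∈ S := Or.inl hw
  have hzS : z ∈ S := Or.inr P.end_mem_support
  have keyS : ∀ a ∈ S, ∀ b ∈ S, RIn G S a b := by
    have hub : ∀ a ∈ S, RIn G S a y := by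
      rintro a (haB | haQ)
      · by_cases hay : a = y
        · subst hay; exact RIn.refl hyS
        · exact RIn.adj (hclq haB hy hay) (Or.inl haB) hyS
      · have h1 : RIn G S a w :=
          RIn.mono (fun x hx => Or.inr hx) (pathToStart P a haQ)
        exact h1.trans (RIn.adj (hclq hw hy hwy) hwS hyS)
    exact fun a ha b hb => (hub a ha).trans (hub b hb).symm
  have key : ∀ (v : V), ∀ a ∈ S \ {v}, ∀ b ∈ S \ {v}, RIn G (S \ {v}) a b := by
    intro v
    by_cases hv : v = y
    · subst hv
      have hwv : w ∈ S \ {v} := ⟨hwS, hwy⟩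
      have hub : ∀ a ∈ S \ {v}, RIn G (S \ {v}) a w := by
        rintro a ⟨haS, hay⟩
        rcases haS with haB | haQ
        · by_cases haw : a = w
          · subst haw; exact RIn.refl hwv
          · exact RIn.adj (hclq haB hw haw) ⟨Or.inl haB, hay⟩ hwv
        · exact RIn.mono (fun x hx => ⟨Or.inr hx, hPsupp x hx⟩) (pathToStart P a haQ)
      exact fun a ha b hb => (hub a ha).trans (hub b hb).symm
    · have hyv : y ∈ S \ {v} := ⟨hyS, Ne.symm hv⟩
      have hub : ∀ a ∈ S \ {v}, RIn G (S \ {v}) a y := by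
        rintro a ⟨haS, hav⟩
        rcases haS with haB | haQ
        · by_cases hay : a = y
          · subst hay; exact RIn.refl hyv
          · exact RIn.adj (hclq haB hy hay) ⟨Or.inl haB, hav⟩ hyv
        · rcases pathSplit P hPpath v a haQ hav with ⟨hwv, hr⟩ | ⟨hzv, hr⟩
          · have hr' : RIn G (S \ {v}) a w :=
              RIn.mono (fun x hx => ⟨Or.inr hx.1, hx.2⟩) hr
            exact hr'.trans (RIn.adj (hclq hw hy hwy) ⟨hwS, hwv⟩ hyv)
          · have hr' : RIn G (S \ {v}) a z :=
              RIn.mono (fun x hx => ⟨Or.inr hx.1, hx.2⟩) hr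
            exact hr'.trans (RIn.adj hz.symm ⟨hzS, hzv⟩ hyv)
      exact fun a ha b hb => (hub a ha).trans (hub b hb).symm
  have hGood : GoodSet G S := by
    constructor
    · rw [SimpleGraph.connected_iff]
      refine ⟨?_, ⟨⟨y, hyS⟩⟩⟩
      rintro ⟨a, ha⟩ ⟨b, hb⟩
      exact rin_reachable (keyS a ha b hb) ha hb
    · rintro v ⟨x1, y1, hreach, hnot⟩
      apply hnot
      have hx1v : (x1 : ↥S).1 ≠ (v : V) := fun h => x1.2 (Subtype.ext h)
      have hy1v : (y1 : ↥S).1 ≠ (v : V) := fun h => y1.2 (Subtype.ext h)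
      exact rin_reachable2
        (key (v : V) x1.1.1 ⟨x1.1.2, hx1v⟩ y1.1.1 ⟨y1.1.2, hy1v⟩)
        x1.1.2 hx1v y1.1.2 hy1v
  have hSB : S = Bs := hB.2 S Set.subset_union_left hGood
  exact hzB (hSB ▸ hzS)

lemma cN_comm {G : SimpleGraph V} {p q : V} : p ∈ cN G q ↔ q ∈ cN G p := by
  unfold cN
  simp only [Set.mem_insert_iff, Set.mem_setOf_eq]
  rw [eq_comm, G.adj_comm]

lemma swap_count [Fintype V] {L T : Set V} {x c : V}
    (hx : x ∈ L) (hc : c ∉ L) (hT : x ∈ T → c ∈ T) :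
    (T ∩ L).ncard ≤ (T ∩ insert c (L \ {x})).ncard := by
  by_cases hxT : x ∈ T
  · have hcT := hT hxT
    have heq : T ∩ insert c (L \ {x}) = insert c ((T ∩ L) \ {x}) := by
      ext u
      simp only [Set.mem_inter_iff, Set.mem_insert_iff, Set.mem_diff, Set.mem_singleton_iff]
      constructor
      · rintro ⟨hu, rfl | ⟨huL, hux⟩⟩
        · exact Or.inl rfl
        · exact Or.inr ⟨⟨hu, huL⟩, hux⟩
      · rintro (rfl | ⟨⟨hu, huL⟩, hux⟩)
        · exact ⟨hcT, Or.inl rfl⟩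
        · exact ⟨hu, Or.inr ⟨huL, hux⟩⟩
    rw [heq]
    rw [Set.ncard_insert_of_notMem (fun h => hc h.1.2) (Set.toFinite _)]
    have h2 : ((T ∩ L) \ {x}).ncard + 1 = (T ∩ L).ncard :=
      Set.ncard_diff_singleton_add_one ⟨hxT, hx⟩ (Set.toFinite _)
    omega
  · refine Set.ncard_le_ncard ?_ (Set.toFinite _)
    rintro u ⟨huT, huL⟩
    exact ⟨huT, Or.inr ⟨huL, fun h => hxT (h ▸ huT)⟩⟩

end Aux


theorem stmt_2
    {V : Type*} [Fintype V] [DecidableEq V]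
    (H : LBG V)
    (hBG : IsBlockGraph H.graph)
    (hk : ∀ e : Sym2 V, H.k e ≤ 2)
    (ρ : {v : V // IsCutVertex H.graph v})
    (B' : {Bs : Set V // IsBlock H.graph Bs})
    (hsupp : IsSupportBlock H.graph ρ B')
    (ch : V) (hchCut : IsCutVertex H.graph ch) (hchB : ch ∈ (B' : Set V))
    (hchMin : ∀ (c : V) (hc : IsCutVertex H.graph c), c ∈ (B' : Set V) →
      rootDist H.graph ρ (Sum.inr ⟨ch, hchCut⟩) ≤ rootDist H.graph ρ (Sum.inr ⟨c, hc⟩))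
    (ci : V) (hciCut : IsCutVertex H.graph ci) (hciB : ci ∈ (B' : Set V)) (hcich : ci ≠ ch)
    (Bij : Set V) (hEnd : EndBlockWith H.graph Bij ci)
    (hl2 : ({e : Sym2 V | e ∈ blockEdges H.graph Bij ∧ ci ∉ e ∧ H.k e = 2}).ncard = 0)
    (hl1 : 1 ≤ ({e : Sym2 V | e ∈ blockEdges H.graph Bij ∧ ci ∉ e ∧ H.k e = 1}).ncard)
    (A : Set V)
    (hAsub : A ⊆ {v | v ∈ Bij ∧ H.t v = TLabel.B})
    (hAcard : A.ncard = 1 - (rSet H Bij).ncard)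
    (hApri : H.t ci = TLabel.B → A.Nonempty → ci ∈ A) :
    gam H = gam (relabelR H A) := by
  
  classical
  have hclq : H.graph.IsClique Bij := hBG Bij hEnd.1
  have hciBij : ci ∈ Bij := hEnd.2.1
  have hrt : ∀ v, (relabelR H A).t v = if v ∈ A then TLabel.R else H.t v := fun v => rfl
  have relabel_to_H : ∀ L : Set V, IsMLVE (relabelR H A) L → IsMLVE H L := by
    rintro L ⟨h1, h2, h3, h4⟩
    refine ⟨fun v hv => h1 v ?_, h2, h3, h4⟩
    rw [hrt]; split_ifs with h
    · rfl
    · exact hv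
  have H_to_relabel : ∀ L : Set V, IsMLVE H L → IsMLVE (relabelR H A) (L ∪ A) := by
    rintro L ⟨h1, h2, h3, h4⟩
    have hmono : ∀ T : Set V, (T ∩ L).ncard ≤ (T ∩ (L ∪ A)).ncard := fun T =>
      Set.ncard_le_ncard (Set.inter_subset_inter_right T Set.subset_union_left)
        (Set.toFinite _)
    refine ⟨?_, fun v => le_trans (h2 v) (hmono _),
      fun e he => le_trans (h3 e he) (hmono _),
      fun e he f hf hef => le_trans (h4 e he f hf hef) (hmono _)⟩
    intro v hv
    rw [hrt] at hv
    by_cases h : v ∈ A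
    · exact Or.inr h
    · rw [if_neg h] at hv; exact Or.inl (h1 v hv)
  have main : ∀ L : Set V, IsMLVE H L →
      ∃ L' : Set V, IsMLVE (relabelR H A) L' ∧ L'.ncard ≤ L.ncard := by
    intro L hL
    rcases Set.eq_empty_or_nonempty A with hA | hA
    · refine ⟨L, ⟨fun v hv => hL.1 v ?_, hL.2.1, hL.2.2.1, hL.2.2.2⟩, le_refl _⟩
      rw [hrt] at hv; rwa [hA, if_neg (Set.notMem_empty v)] at hv
    · have hr1 : 0 < A.ncard := (Set.ncard_pos (Set.toFinite A)).mpr hA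
      have hr0 : (rSet H Bij).ncard = 0 := by omega
      have hrEmpty : rSet H Bij = ∅ := (Set.ncard_eq_zero (Set.toFinite _)).mp hr0
      have htB : ∀ v ∈ Bij, H.t v = TLabel.B := by
        intro v hv
        cases h : H.t v with
        | B => rfl
        | R =>
          exfalso
          have hmem : v ∈ rSet H Bij := ⟨hv, h⟩
          rw [hrEmpty] at hmem
          exact Set.notMem_empty v hmem
      have hciA : ci ∈ A := hApri (htB ci hciBij) hA
      have hAeq : A = {ci} := by
        obtain ⟨a, ha⟩ := Set.ncard_eq_one.mp (show A.ncard = 1 by omega)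
        rw [ha]; rw [ha] at hciA; simp only [Set.mem_singleton_iff] at hciA; rw [hciA]
      have build : ∀ L' : Set V, IsMLVE H L' → ci ∈ L' → L'.ncard ≤ L.ncard →
          ∃ L'' : Set V, IsMLVE (relabelR H A) L'' ∧ L''.ncard ≤ L.ncard := by
        intro L' hL' hci hcard
        refine ⟨L', ⟨?_, hL'.2.1, hL'.2.2.1, hL'.2.2.2⟩, hcard⟩
        intro v hv
        rw [hrt] at hv
        by_cases h : v ∈ A
        · rw [hAeq] at h; rw [Set.mem_singleton_iff] at h; rw [h]; exact hci
        · rw [if_neg h] at hv; exact hL'.1 v hv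
      by_cases hciL : ci ∈ L
      · exact build L hL hciL (le_refl _)
      · have hne : ({e : Sym2 V | e ∈ blockEdges H.graph Bij ∧ ci ∉ e ∧ H.k e = 1}).Nonempty :=
          Set.nonempty_of_ncard_ne_zero (by omega)
        obtain ⟨e, he⟩ := hne
        rw [Set.mem_setOf_eq] at he
        revert he
        induction e using Sym2.ind with
        | _ u w =>
        intro he
        obtain ⟨⟨heE, heB⟩, heci, hek⟩ := he
        have huB : u ∈ Bij := heB u (Sym2.mem_mk_left u w)
        have hwB : w ∈ Bij := heB w (Sym2.mem_mk_right u w)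
        have hnotcut : ∀ p ∈ Bij, p ≠ ci → ¬ IsCutVertex H.graph p :=
          fun p hp hpne hc => hpne (hEnd.2.2.2 p hp hc)
        have h3 := hL.2.2.1 s(u, w) heE
        rw [hek] at h3
        obtain ⟨x, hxE, hxL⟩ :=
          Set.nonempty_of_ncard_ne_zero
            (show (eN H.graph s(u, w) ∩ L).ncard ≠ 0 by omega)
        have hxBij : x ∈ Bij := by
          simp only [eN, Set.mem_setOf_eq] at hxE
          obtain ⟨p, hpe, hxp⟩ := hxE
          have hpB : p ∈ Bij := heB p hpe
          have hpci : p ≠ ci := fun h => heci (h ▸ hpe)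
          rcases Set.mem_insert_iff.mp hxp with rfl | hadj'
          · exact hpB
          · exact blockNbhd hEnd.1 hclq hpB hciBij (Ne.symm hpci)
              (hnotcut p hpB hpci) hadj'
        have hxci : x ≠ ci := fun h => hciL (h ▸ hxL)
        have hxBnbhd : ∀ q, H.graph.Adj x q → q ∈ Bij :=
          fun q h => blockNbhd hEnd.1 hclq hxBij hciBij (Ne.symm hxci)
            (hnotcut x hxBij hxci) h
        have hkey : ∀ q, q ∈ cN H.graph x → q ∈ cN H.graph ci := by
          intro q hq
          rcases Set.mem_insert_iff.mp hq with rfl | hadj'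
          · exact Set.mem_insert_iff.mpr
              (Or.inr (hclq hciBij hxBij (Ne.symm hxci)))
          · have hqB : q ∈ Bij := hxBnbhd q hadj'
            by_cases hqc : q = ci
            · exact Set.mem_insert_iff.mpr (Or.inl hqc)
            · exact Set.mem_insert_iff.mpr (Or.inr (hclq hciBij hqB (Ne.symm hqc)))
        have hcN : ∀ v, x ∈ cN H.graph v → ci ∈ cN H.graph v :=
          fun v h => cN_comm.mp (hkey v (cN_comm.mp h))
        have heN : ∀ e' : Sym2 V, x ∈ eN H.graph e' → ci ∈ eN H.graph e' := by
          intro e' hx'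
          simp only [eN, Set.mem_setOf_eq] at hx' ⊢
          obtain ⟨p, hpe, hxp⟩ := hx'
          exact ⟨p, hpe, cN_comm.mp (hkey p (cN_comm.mp hxp))⟩
        set L' : Set V := insert ci (L \ {x}) with hL'def
        have hciL' : ci ∈ L' := Set.mem_insert _ _
        have hcount : ∀ T : Set V, (x ∈ T → ci ∈ T) →
            (T ∩ L).ncard ≤ (T ∩ L').ncard :=
          fun T hT => swap_count hxL hciL hT
        have hLcard : L'.ncard ≤ L.ncard := by
          calc L'.ncard ≤ (L \ {x}).ncard + 1 := Set.ncard_insert_le _ _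
            _ = L.ncard := Set.ncard_diff_singleton_add_one hxL (Set.toFinite _)
        refine build L' ⟨?_, ?_, ?_, ?_⟩ hciL' hLcard
        · intro v hv
          by_cases hvx : v = x
          · exfalso; rw [hvx, htB x hxBij] at hv; exact TLabel.noConfusion hv
          · exact Set.mem_insert_iff.mpr (Or.inr ⟨hL.1 v hv, hvx⟩)
        · exact fun v => le_trans (hL.2.1 v) (hcount _ (hcN v))
        · exact fun e' he' => le_trans (hL.2.2.1 e' he') (hcount _ (heN e'))
        · intro e' he' f' hf' hef
          refine le_trans (hL.2.2.2 e' he' f' hf' hef) (hcount _ ?_)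
          rintro (h | h)
          · exact Or.inl (heN e' h)
          · exact Or.inr (heN f' h)
  unfold gam
  rcases Set.eq_empty_or_nonempty {n | ∃ L : Set V, IsMLVE H L ∧ L.ncard = n} with hTH | hTH
  · have hTR : {n | ∃ L : Set V, IsMLVE (relabelR H A) L ∧ L.ncard = n} = ∅ := by
      rw [Set.eq_empty_iff_forall_notMem]
      rintro n ⟨L, hL, rfl⟩
      rw [Set.eq_empty_iff_forall_notMem] at hTH
      exact hTH _ ⟨L, relabel_to_H L hL, rfl⟩
    rw [hTH, hTR]
  · apply le_antisymm
    · obtain ⟨n, L, hL, rfl⟩ := hTH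
      have hTRne : Set.Nonempty
          {n | ∃ L : Set V, IsMLVE (relabelR H A) L ∧ L.ncard = n} :=
        ⟨(L ∪ A).ncard, L ∪ A, H_to_relabel L hL, rfl⟩
      obtain ⟨L', hL', hcard⟩ := Nat.sInf_mem hTRne
      exact Nat.sInf_le ⟨L', relabel_to_H L' hL', hcard⟩
    · obtain ⟨L, hL, hcard⟩ := Nat.sInf_mem hTH
      obtain ⟨L', hL', hle⟩ := main L hL
      calc sInf {n | ∃ L : Set V, IsMLVE (relabelR H A) L ∧ L.ncard = n}
            ≤ L'.ncard := Nat.sInf_le ⟨L', hL', rfl⟩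
        _ ≤ L.ncard := hle
        _ = _ := hcard
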